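/- arXiv:2603.24748 — 2 statements merged into one kernel-verified Lean document; each statement's English description precedes it below -/
import Mathlib

section
/- Let w1, w2, w3 > 0, h > 0 and 0 < λ ≤ 2. If (tr Q(h,λ))² − 4·det Q(h,λ) < 0, then the two complex eigenvalues of Q(h,λ) form a nonreal complex-conjugate pair, every complex eigenvalue μ of Q(h,λ) satisfies |μ|² = det Q(h,λ), and consequently the spectral radius of Q(h,λ) equals √(det Q(h,λ)) and is strictly less than 1. -/
/-!
A real `2 × 2` matrix with negative discriminant has characteristic polynomial
`(z - μ) (z - conj μ)` for a non-real `μ`, so its complex spectrum is `{μ, conj μ}` and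
`‖μ‖ ^ 2 = μ * conj μ = det`, whence the spectral radius is `√det`. For `Q` one computes
`1 - det Q = (w2 h² + w1 h⁴ (2 - λ) / 4) / S(h)`, which is positive when `λ ≤ 2`.
-/

noncomputable def Sh (w1 w2 w3 h : ℝ) : ℝ := w3 + w2 * h ^ 2 + w1 * h ^ 4 / 4

noncomputable def ah (w1 w2 w3 h : ℝ) : ℝ := w1 * h ^ 2 / (2 * Sh w1 w2 w3 h)

noncomputable def bh (w1 w2 w3 h : ℝ) : ℝ := (w2 * h + w1 * h ^ 3 / 2) / Sh w1 w2 w3 h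

noncomputable def Q (w1 w2 w3 h lam : ℝ) : Matrix (Fin 2) (Fin 2) ℝ :=
  !![1 - h ^ 2 / 2 * ah w1 w2 w3 h * lam, h - h ^ 2 / 2 * bh w1 w2 w3 h;
     -(h * ah w1 w2 w3 h * lam), 1 - h * bh w1 w2 w3 h]

/-- The matrix `Q` viewed as a complex matrix. -/
noncomputable def Qc (w1 w2 w3 h lam : ℝ) : Matrix (Fin 2) (Fin 2) ℂ :=
  (Q w1 w2 w3 h lam).map (fun x => (x : ℂ))

open ComplexConjugate

theorem Complex.exists_quadratic_eq_mul_conj_of_discrim_neg {t d : ℝ}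
    (hdisc : t ^ 2 - 4 * d < 0) :
    ∃ μ : ℂ, μ.im ≠ 0 ∧ ∀ z : ℂ, z ^ 2 - t * z + d = (z - μ) * (z - conj μ) := by
  set r := √(4 * d - t ^ 2)
  have hr : r ^ 2 = 4 * d - t ^ 2 := Real.sq_sqrt (by linarith)
  have hr0 : 0 < r := Real.sqrt_pos.2 (by linarith)
  set μ : ℂ := ⟨t / 2, r / 2⟩
  have hsum : μ + conj μ = t := by rw [Complex.add_conj]; simp [μ, mul_div_cancel₀]
  have hprod : μ * conj μ = d := by
    rw [Complex.mul_conj, Complex.normSq_mk, Complex.ofReal_inj]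
    linear_combination hr / 4
  refine ⟨μ, by positivity, fun z => ?_⟩
  linear_combination z * hsum - hprod

theorem Matrix.mem_spectrum_map_fin_two_iff {K L : Type*} [Field K] [Field L] (f : K →+* L)
    (A : Matrix (Fin 2) (Fin 2) K) (z : L) :
    z ∈ spectrum L (A.map f) ↔ z ^ 2 - f A.trace * z + f A.det = 0 := by
  rw [mem_spectrum_iff_isRoot_charpoly, charpoly_map, charpoly_fin_two]
  simp

theorem Matrix.exists_spectrum_map_ofReal_eq_pair_conj {A : Matrix (Fin 2) (Fin 2) ℝ}
    (hdisc : A.trace ^ 2 - 4 * A.det < 0) :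
    ∃ μ : ℂ, μ.im ≠ 0 ∧ spectrum ℂ (A.map ((↑) : ℝ → ℂ)) = {μ, conj μ} ∧ ‖μ‖ ^ 2 = A.det := by
  obtain ⟨μ, hμ, hfactor⟩ := Complex.exists_quadratic_eq_mul_conj_of_discrim_neg hdisc
  refine ⟨μ, hμ, Set.ext fun z => ?_, ?_⟩
  · refine (A.mem_spectrum_map_fin_two_iff Complex.ofRealHom z).trans ?_
    simp only [Complex.ofRealHom_eq_coe]
    rw [hfactor, mul_eq_zero, sub_eq_zero, sub_eq_zero, Set.mem_insert_iff,
      Set.mem_singleton_iff]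
  · have hconst := hfactor 0
    rw [zero_sub, zero_sub, neg_mul_neg, Complex.mul_conj] at hconst
    simpa [Complex.sq_norm] using hconst.symm

theorem spectralRadius_eq_of_spectrum_eq_pair_conj {A : Type*} [Ring A] [Algebra ℂ A] {a : A}
    {μ : ℂ} (h : spectrum ℂ a = {μ, conj μ}) : spectralRadius ℂ a = ‖μ‖ₑ := by
  rw [spectralRadius, h, iSup_insert, iSup_singleton, RCLike.nnnorm_conj, sup_idem]
  rfl

theorem one_sub_det_Q (w1 w2 w3 h lam : ℝ) (hS : Sh w1 w2 w3 h ≠ 0) :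
    1 - (Q w1 w2 w3 h lam).det = (w2 * h ^ 2 + w1 * h ^ 4 * (2 - lam) / 4) / Sh w1 w2 w3 h := by
  rw [Q, Matrix.det_fin_two_of, ah, bh]
  field_simp
  ring

theorem det_Q_lt_one {w1 w2 w3 h lam : ℝ} (hw1 : 0 ≤ w1) (hw2 : 0 < w2) (hw3 : 0 < w3)
    (hh : h ≠ 0) (hlam : lam ≤ 2) : (Q w1 w2 w3 h lam).det < 1 := by
  have hS : 0 < Sh w1 w2 w3 h := by unfold Sh; positivity
  have hlam' : 0 ≤ 2 - lam := sub_nonneg.2 hlam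
  have hpos : 0 < 1 - (Q w1 w2 w3 h lam).det := by
    rw [one_sub_det_Q w1 w2 w3 h lam hS.ne']
    positivity
  linarith

theorem complex_pair_case_general (w1 w2 w3 h lam : ℝ) (hw1 : 0 < w1) (hw2 : 0 < w2)
    (hw3 : 0 < w3) (hh : 0 < h) (hlam2 : lam ≤ 2)
    (hdisc : (Q w1 w2 w3 h lam).trace ^ 2 - 4 * (Q w1 w2 w3 h lam).det < 0) :
    (∃ μ : ℂ, μ.im ≠ 0 ∧
        spectrum ℂ (Qc w1 w2 w3 h lam) = {μ, (starRingEnd ℂ) μ}) ∧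
    (∀ μ ∈ spectrum ℂ (Qc w1 w2 w3 h lam),
        ‖μ‖ ^ 2 = (Q w1 w2 w3 h lam).det) ∧
    spectralRadius ℂ (Qc w1 w2 w3 h lam)
      = ENNReal.ofReal (Real.sqrt (Q w1 w2 w3 h lam).det) ∧
    spectralRadius ℂ (Qc w1 w2 w3 h lam) < 1 := by
  obtain ⟨μ, hμ, hspec, hnorm⟩ := Matrix.exists_spectrum_map_ofReal_eq_pair_conj hdisc
  have hnorm' : ‖μ‖ = √(Q w1 w2 w3 h lam).det := by rw [← hnorm, Real.sqrt_sq (norm_nonneg μ)]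
  have hradius :
      spectralRadius ℂ (Qc w1 w2 w3 h lam) = ENNReal.ofReal √(Q w1 w2 w3 h lam).det := by
    rw [Qc, spectralRadius_eq_of_spectrum_eq_pair_conj hspec, ← ofReal_norm, hnorm']
  refine ⟨⟨μ, hμ, hspec⟩, ?_, hradius, ?_⟩
  · rw [Qc, hspec]
    rintro z (rfl | rfl) <;> simp [hnorm]
  · rw [hradius, ENNReal.ofReal_lt_one, Real.sqrt_lt' one_pos, one_pow]
    exact det_Q_lt_one hw1.le hw2 hw3 hh.ne' hlam2

theorem complex_pair_case (w1 w2 w3 h lam : ℝ) (hw1 : 0 < w1) (hw2 : 0 < w2)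
    (hw3 : 0 < w3) (hh : 0 < h) (hlam0 : 0 < lam) (hlam2 : lam ≤ 2)
    (hdisc : (Q w1 w2 w3 h lam).trace ^ 2 - 4 * (Q w1 w2 w3 h lam).det < 0) :
    (∃ μ : ℂ, μ.im ≠ 0 ∧
        spectrum ℂ (Qc w1 w2 w3 h lam) = {μ, (starRingEnd ℂ) μ}) ∧
    (∀ μ ∈ spectrum ℂ (Qc w1 w2 w3 h lam),
        ‖μ‖ ^ 2 = (Q w1 w2 w3 h lam).det) ∧
    spectralRadius ℂ (Qc w1 w2 w3 h lam)
      = ENNReal.ofReal (Real.sqrt (Q w1 w2 w3 h lam).det) ∧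
    spectralRadius ℂ (Qc w1 w2 w3 h lam) < 1 :=
  complex_pair_case_general w1 w2 w3 h lam hw1 hw2 hw3 hh hlam2 hdisc
end

section
/- Let w1, w2, w3 > 0 and λ > 0. There exists h0 > 0 such that for every h ∈ (0, h0) with (tr Q(h,λ))² − 4·det Q(h,λ) ≥ 0, both eigenvalues of Q(h,λ) are real and positive, the quantity η := h·b^h + (h²/2)·a^h·λ is positive and satisfies 0 < 4·h²·a^h·λ / η² ≤ 1, the spectral radius of Q(h,λ) equals 1 − (η/2)·(1 − √(1 − 4·h²·a^h·λ / η²)), and this spectral radius is strictly less than 1. -/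
/-!
With `η = h bʰ + (h²/2) aʰ λ` one has `tr Q = 2 - η` and `det Q = 1 - η + h² aʰ λ`, so the
eigenvalues are `(2 - η ± √(η² - 4 h² aʰ λ)) / 2`. Since `η < 1` amounts to
`w1 h⁴ (1 + λ) < 4 w3`, it holds for small `h`; as the square root lies strictly between `0`
and `η`, both eigenvalues then lie in `(0, 1)`.
-/

theorem Matrix.spectrum_fin_two_eq_pair {K : Type*} [Field K] (A : Matrix (Fin 2) (Fin 2) K)
    {r₁ r₂ : K} (hsum : r₁ + r₂ = A.trace) (hprod : r₁ * r₂ = A.det) :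
    spectrum K A = {r₁, r₂} := by
  ext μ
  have hchar : (algebraMap K (Matrix (Fin 2) (Fin 2) K) μ - A).det = (μ - r₁) * (μ - r₂) := by
    rw [Matrix.trace_fin_two] at hsum
    rw [Matrix.det_fin_two] at hprod ⊢
    simp only [Matrix.algebraMap_matrix_apply, Matrix.sub_apply, Algebra.algebraMap_self,
      RingHom.id_apply, ↓reduceIte, zero_ne_one, one_ne_zero, zero_sub]
    linear_combination μ * hsum - hprod
  rw [spectrum.mem_iff, Matrix.isUnit_iff_isUnit_det, isUnit_iff_ne_zero, not_not, hchar,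
    mul_eq_zero, sub_eq_zero, sub_eq_zero, Set.mem_insert_iff, Set.mem_singleton_iff]

theorem Matrix.spectrum_map_ofReal_fin_two (M : Matrix (Fin 2) (Fin 2) ℝ)
    (hdisc : 0 ≤ M.trace ^ 2 - 4 * M.det) :
    spectrum ℂ (M.map ((↑) : ℝ → ℂ)) =
      {↑((M.trace + √(M.trace ^ 2 - 4 * M.det)) / 2),
        ↑((M.trace - √(M.trace ^ 2 - 4 * M.det)) / 2)} := by
  have htrace : (M.map ((↑) : ℝ → ℂ)).trace = M.trace := by
    rw [Matrix.trace_fin_two, Matrix.trace_fin_two]; simp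
  have hdet : (M.map ((↑) : ℝ → ℂ)).det = M.det := by
    rw [Matrix.det_fin_two, Matrix.det_fin_two]; simp
  have hsq := congrArg ((↑) : ℝ → ℂ) (Real.sq_sqrt hdisc)
  apply Matrix.spectrum_fin_two_eq_pair
  · rw [htrace]; push_cast; ring
  · rw [hdet]; push_cast at hsq ⊢; linear_combination (-1 / 4 : ℂ) * hsq

theorem spectralRadius_eq_of_spectrum_eq_pair {A : Type*} [Ring A] [Algebra ℂ A] {a : A}
    {r₁ r₂ : ℝ} (hspec : spectrum ℂ a = {(r₁ : ℂ), (r₂ : ℂ)}) (h₂₁ : |r₂| ≤ r₁) :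
    spectralRadius ℂ a = ENNReal.ofReal r₁ := by
  have hnorm (r : ℝ) : ((‖(r : ℂ)‖₊ : ENNReal)) = ENNReal.ofReal |r| := by
    rw [Complex.nnnorm_real, ← enorm_eq_nnnorm, Real.enorm_eq_ofReal_abs]
  rw [spectralRadius, hspec, iSup_pair, hnorm, hnorm, abs_of_nonneg ((abs_nonneg _).trans h₂₁),
    sup_eq_left]
  exact ENNReal.ofReal_le_ofReal h₂₁

theorem one_sub_half_mul_one_sub_sqrt_eq {η q : ℝ} (hη : 0 < η) :
    1 - η / 2 * (1 - √(1 - q / η ^ 2)) = (2 - η + √(η ^ 2 - q)) / 2 := by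
  have hsqrt : √(1 - q / η ^ 2) = √(η ^ 2 - q) / η := by
    rw [one_sub_div (by positivity), Real.sqrt_div' _ (by positivity), Real.sqrt_sq hη.le]
  rw [hsqrt]
  field_simp
  ring

section Scheme

variable {w1 w2 w3 h lam : ℝ}

theorem Sh_pos (hw1 : 0 ≤ w1) (hw2 : 0 ≤ w2) (hw3 : 0 < w3) : 0 < Sh w1 w2 w3 h := by
  unfold Sh; positivity

theorem ah_pos (hw1 : 0 < w1) (hw2 : 0 ≤ w2) (hw3 : 0 < w3) (hh : h ≠ 0) :
    0 < ah w1 w2 w3 h := by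
  have := Sh_pos hw1.le hw2 hw3 (h := h)
  unfold ah; positivity

theorem bh_nonneg (hw1 : 0 ≤ w1) (hw2 : 0 ≤ w2) (hw3 : 0 < w3) (hh : 0 ≤ h) :
    0 ≤ bh w1 w2 w3 h := by
  have := Sh_pos hw1 hw2 hw3 (h := h)
  unfold bh; positivity

noncomputable def etah (w1 w2 w3 h lam : ℝ) : ℝ :=
  h * bh w1 w2 w3 h + h ^ 2 / 2 * ah w1 w2 w3 h * lam

theorem trace_Q : (Q w1 w2 w3 h lam).trace = 2 - etah w1 w2 w3 h lam := by
  rw [Q, Matrix.trace_fin_two_of, etah]; ring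

theorem det_Q :
    (Q w1 w2 w3 h lam).det = 1 - etah w1 w2 w3 h lam + h ^ 2 * ah w1 w2 w3 h * lam := by
  rw [Q, Matrix.det_fin_two_of, etah]; ring

theorem etah_eq_div :
    etah w1 w2 w3 h lam = (w2 * h ^ 2 + w1 * h ^ 4 / 2 + w1 * h ^ 4 * lam / 4) / Sh w1 w2 w3 h := by
  rw [etah, ah, bh]; ring

theorem etah_lt_one_iff (hS : 0 < Sh w1 w2 w3 h) :
    etah w1 w2 w3 h lam < 1 ↔ w1 * h ^ 4 * (1 + lam) < 4 * w3 := by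
  rw [etah_eq_div, div_lt_one hS, Sh]
  constructor <;> intro <;> linarith

theorem etah_pos (hw1 : 0 < w1) (hw2 : 0 ≤ w2) (hw3 : 0 < w3) (hlam : 0 < lam) (hh : 0 < h) :
    0 < etah w1 w2 w3 h lam := by
  have := ah_pos hw1 hw2 hw3 hh.ne'
  have := bh_nonneg hw1.le hw2 hw3 hh.le
  unfold etah; positivity

theorem etah_lt_one (hw1 : 0 < w1) (hw2 : 0 ≤ w2) (hw3 : 0 < w3) (hlam : 0 ≤ lam) (hh : 0 < h)
    (hh0 : h < min 1 (4 * w3 / (w1 * (1 + lam)))) : etah w1 w2 w3 h lam < 1 := by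
  have hk : 0 < w1 * (1 + lam) := by positivity
  have hh1 : h ^ 4 ≤ h := pow_le_of_le_one hh.le (hh0.trans_le (min_le_left _ _)).le (by norm_num)
  have hhk : w1 * (1 + lam) * h < 4 * w3 :=
    (lt_div_iff₀' hk).1 (hh0.trans_le (min_le_right _ _))
  rw [etah_lt_one_iff (Sh_pos hw1.le hw2 hw3)]
  nlinarith

end Scheme

theorem real_eigenvalue_case (w1 w2 w3 lam : ℝ) (hw1 : 0 < w1) (hw2 : 0 < w2)
    (hw3 : 0 < w3) (hlam : 0 < lam) :
    ∃ h0 > 0, ∀ h : ℝ, 0 < h → h < h0 →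
      (Q w1 w2 w3 h lam).trace ^ 2 - 4 * (Q w1 w2 w3 h lam).det ≥ 0 →
      (∀ μ ∈ spectrum ℂ (Qc w1 w2 w3 h lam), ∃ x : ℝ, 0 < x ∧ μ = (x : ℂ)) ∧
      (0 < h * bh w1 w2 w3 h + h ^ 2 / 2 * ah w1 w2 w3 h * lam) ∧
      (0 < 4 * h ^ 2 * ah w1 w2 w3 h * lam /
          (h * bh w1 w2 w3 h + h ^ 2 / 2 * ah w1 w2 w3 h * lam) ^ 2) ∧
      (4 * h ^ 2 * ah w1 w2 w3 h * lam /
          (h * bh w1 w2 w3 h + h ^ 2 / 2 * ah w1 w2 w3 h * lam) ^ 2 ≤ 1) ∧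
      spectralRadius ℂ (Qc w1 w2 w3 h lam)
        = ENNReal.ofReal
            (1 - (h * bh w1 w2 w3 h + h ^ 2 / 2 * ah w1 w2 w3 h * lam) / 2 *
              (1 - Real.sqrt (1 - 4 * h ^ 2 * ah w1 w2 w3 h * lam /
                (h * bh w1 w2 w3 h + h ^ 2 / 2 * ah w1 w2 w3 h * lam) ^ 2))) ∧
      spectralRadius ℂ (Qc w1 w2 w3 h lam) < 1 := by
  refine ⟨min 1 (4 * w3 / (w1 * (1 + lam))), lt_min one_pos (by positivity),
    fun h hh hh0 hdisc => ?_⟩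
  rw [show h * bh w1 w2 w3 h + h ^ 2 / 2 * ah w1 w2 w3 h * lam = etah w1 w2 w3 h lam from rfl]
  have hη := etah_pos hw1 hw2.le hw3 hlam hh
  have hη1 := etah_lt_one hw1 hw2.le hw3 hlam.le hh hh0
  have hq : 0 < 4 * h ^ 2 * ah w1 w2 w3 h * lam := by
    have := ah_pos hw1 hw2.le hw3 hh.ne'
    positivity
  have hdisc_eq : (Q w1 w2 w3 h lam).trace ^ 2 - 4 * (Q w1 w2 w3 h lam).det =
      etah w1 w2 w3 h lam ^ 2 - 4 * h ^ 2 * ah w1 w2 w3 h * lam := by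
    rw [trace_Q, det_Q]; ring
  have hspec : spectrum ℂ (Qc w1 w2 w3 h lam) = _ :=
    Matrix.spectrum_map_ofReal_fin_two _ hdisc
  rw [hdisc_eq, trace_Q] at hspec
  rw [hdisc_eq] at hdisc
  set η := etah w1 w2 w3 h lam
  set q := 4 * h ^ 2 * ah w1 w2 w3 h * lam
  have hroot : √(η ^ 2 - q) < η := (Real.sqrt_lt' hη).2 (by linarith)
  have hroot₀ := Real.sqrt_nonneg (η ^ 2 - q)
  have hsr := spectralRadius_eq_of_spectrum_eq_pair hspec (abs_le.2 ⟨by linarith, by linarith⟩)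
  refine ⟨?_, hη, by positivity, (div_le_one (by positivity)).2 (by linarith), ?_, ?_⟩
  · rw [hspec]
    rintro μ (rfl | rfl)
    exacts [⟨_, by linarith, rfl⟩, ⟨_, by linarith, rfl⟩]
  · rw [hsr, one_sub_half_mul_one_sub_sqrt_eq hη]
  · rw [hsr, ENNReal.ofReal_lt_one]
    linarith
end
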